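/- arXiv:2603.15176 — 4 statements merged into one kernel-verified Lean document; each statement's English description precedes it below -/
import Mathlib

section
/- In the dynamic network creation game in which players' communication cost uses the temporal shortest distance, for every real atomic cost α with 0 < α < 1 and every number of players n ≥ 2, the price of stability and the price of anarchy both equal 1: PoS(α, n) = PoA(α, n) = 1. -/
open scoped ENNReal BigOperators

/-- A temporal path from `u` to `v`, given as a list of steps `(next vertex, time label)`.
The labelling `lab` gives, for each (ordered) pair of vertices, the set of time labels of the
edge joining them (empty if there is no edge); it is symmetric for temporal graphs arising
from strategy profiles.  The conditions say that consecutive steps use time labels belonging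
to the corresponding edge, that time labels strictly increase along the path, that no vertex is
repeated, and that the path ends at `v`. -/
def IsTemporalPath {V : Type*} (lab : V → V → Set ℕ) (u v : V) (p : List (V × ℕ)) : Prop :=
  List.Chain (fun a b => b.2 ∈ lab a.1 b.1) (u, 0) p ∧
  List.Chain' (· < ·) (p.map Prod.snd) ∧
  (u :: p.map Prod.fst).Nodup ∧
  (u :: p.map Prod.fst).getLast (List.cons_ne_nil _ _) = v

/-- The temporal shortest distance from `u` to `v`: the least number of edges of a temporal
path from `u` to `v` (`0` if `u = v`, `⊤` if there is no temporal path). -/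
noncomputable def temporalDist {V : Type*} (lab : V → V → Set ℕ) (u v : V) : ℕ∞ :=
  sInf {n : ℕ∞ | ∃ p : List (V × ℕ), IsTemporalPath lab u v p ∧ (p.length : ℕ∞) = n}

/-- The labelling of the communication temporal graph `𝒢[s]` of a strategy profile `s`:
`t` is a label of the edge `uv` iff `(u, t) ∈ s v` or `(v, t) ∈ s u`. -/
def profLab {V : Type*} (s : V → Finset (V × ℕ)) : V → V → Set ℕ :=
  fun u v => {t | (u, t) ∈ s v ∨ (v, t) ∈ s u}

/-- The (finite) set of time labels of the edge `uv` in the communication temporal graph. -/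
def labelFinset {V : Type*} [DecidableEq V] (s : V → Finset (V × ℕ)) (u v : V) : Finset ℕ :=
  (((s v).filter (fun p => p.1 = u)).image Prod.snd) ∪
    (((s u).filter (fun p => p.1 = v)).image Prod.snd)

/-- The total number of time labels `∑ e ∈ E, |λ(e)|` of the communication temporal graph
(each unordered pair is counted once, whence the division by `2`). -/
def numLabels {V : Type*} [Fintype V] [DecidableEq V] (s : V → Finset (V × ℕ)) : ℕ :=
  (∑ u : V, ∑ v : V, if u = v then 0 else (labelFinset s u v).card) / 2

/-- The number of edges `|E|` of the communication temporal graph. -/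
def numEdges {V : Type*} [Fintype V] [DecidableEq V] (s : V → Finset (V × ℕ)) : ℕ :=
  ((Finset.univ : Finset (V × V)).filter
    (fun q => q.1 ≠ q.2 ∧ (labelFinset s q.1 q.2).Nonempty)).card / 2

/-- The social cost `c[s] = α·∑_{e ∈ E} |λ(e)| + ∑_{(u,v) ∈ V×V} d_{𝒢[s]}(u,v)`
of a strategy profile `s` for atomic cost `α`. -/
noncomputable def socialCost {V : Type*} [Fintype V] [DecidableEq V]
    (α : ℝ) (s : V → Finset (V × ℕ)) : ℝ≥0∞ :=
  ENNReal.ofReal α * (numLabels s : ℝ≥0∞) +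
    ∑ u : V, ∑ v : V, (temporalDist (profLab s) u v : ℝ≥0∞)

/-- The individual cost `c[s](v) = α·|s(v)| + ∑_{w ∈ V} d_{𝒢[s]}(v,w)` of player `v`. -/
noncomputable def indivCost {V : Type*} [Fintype V]
    (α : ℝ) (s : V → Finset (V × ℕ)) (v : V) : ℝ≥0∞ :=
  ENNReal.ofReal α * ((s v).card : ℝ≥0∞) +
    ∑ w : V, (temporalDist (profLab s) v w : ℝ≥0∞)

/-- A strategy profile is a Nash equilibrium if no player can strictly decrease its individual
cost by changing only its own strategy. -/
def IsNash {V : Type*} [Fintype V] [DecidableEq V] (α : ℝ) (s : V → Finset (V × ℕ)) : Prop :=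
  ∀ (v : V) (t : Finset (V × ℕ)),
    ¬ indivCost α (Function.update s v t) v < indivCost α s v

/-- The optimal social cost `c*(α, n)`: the minimum social cost over all strategy profiles
with `n` players and atomic cost `α`. -/
noncomputable def optCost (α : ℝ) (n : ℕ) : ℝ≥0∞ :=
  ⨅ s : Fin n → Finset (Fin n × ℕ), socialCost α s

/-- The price of anarchy `PoA(α, n)`: the maximum social cost of a Nash equilibrium with `n`
players and atomic cost `α`, divided by the optimal social cost `c*(α, n)`. -/
noncomputable def PoA (α : ℝ) (n : ℕ) : ℝ≥0∞ :=
  (⨆ s : {s : Fin n → Finset (Fin n × ℕ) // IsNash α s}, socialCost α s.1) / optCost α n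

/-- The price of stability `PoS(α, n)`: the minimum social cost of a Nash equilibrium with `n`
players and atomic cost `α`, divided by the optimal social cost `c*(α, n)`. -/
noncomputable def PoS (α : ℝ) (n : ℕ) : ℝ≥0∞ :=
  (⨅ s : {s : Fin n → Finset (Fin n × ℕ) // IsNash α s}, socialCost α s.1) / optCost α n

/-!
For `α < 1`, a player that is not adjacent to some other player gains by buying an edge to it:
the edge costs `α` and saves at least `1` in distance. For `α > 0`, a player that bought a label
on an edge carrying a second label gains by dropping it. Hence every Nash equilibrium is the
complete graph with exactly one label per edge, of social cost `α·n(n-1)/2 + n(n-1)`. This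
`cliqueCost` also bounds the social cost of every profile from below, since each missing edge
adds at least `1 ≥ α` to the distance sum. The clique in which every player buys the edges to
all smaller players is a Nash equilibrium, so the optimum, the best and the worst equilibrium
all cost `cliqueCost`.
-/

open Finset

section TemporalDist
variable {V : Type*} {lab : V → V → Set ℕ} {u v : V}

lemma temporalDist_self (lab : V → V → Set ℕ) (u : V) : temporalDist lab u u = 0 :=
  le_antisymm
    (sInf_le ⟨[], ⟨List.IsChain.singleton _, List.isChain_nil, by simp, rfl⟩, rfl⟩) zero_le

lemma temporalDist_le_one (h : u ≠ v) {t : ℕ} (ht : t ∈ lab u v) : temporalDist lab u v ≤ 1 :=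
  sInf_le ⟨[(v, t)], ⟨List.IsChain.cons_cons ht (List.IsChain.singleton _),
    List.isChain_singleton _, by simp [h], rfl⟩, rfl⟩

lemma one_le_temporalDist (h : u ≠ v) : 1 ≤ temporalDist lab u v := by
  refine le_sInf ?_
  rintro n ⟨p, ⟨-, -, -, hlast⟩, rfl⟩
  cases p with
  | nil => exact absurd hlast h
  | cons _ _ => simp

lemma two_le_temporalDist (h : u ≠ v) (hlab : lab u v = ∅) : 2 ≤ temporalDist lab u v := by
  refine le_sInf ?_
  rintro n ⟨p, ⟨hchain, -, -, hlast⟩, rfl⟩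
  match p with
  | [] => exact absurd hlast h
  | [a] =>
    have hmem := (List.isChain_cons_cons.1 hchain).1
    simp only [List.map_cons, List.map_nil, List.getLast_cons_cons, List.getLast_singleton] at hlast
    simp [hlast, hlab] at hmem
  | _ :: _ :: l => exact_mod_cast Nat.le_add_left 2 l.length

lemma temporalDist_eq_one (h : u ≠ v) (hlab : (lab u v).Nonempty) : temporalDist lab u v = 1 :=
  le_antisymm (temporalDist_le_one h hlab.some_mem) (one_le_temporalDist h)

variable [Fintype V]

lemma sum_temporalDist_eq (h : ∀ w ≠ v, (lab v w).Nonempty) :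
    ∑ w, (temporalDist lab v w : ℝ≥0∞) = (Fintype.card V - 1 : ℕ) := by
  classical
  rw [← add_sum_erase _ _ (mem_univ v), temporalDist_self, ENat.toENNReal_zero, zero_add,
    sum_congr rfl fun w hw => by
      rw [temporalDist_eq_one (ne_of_mem_erase hw).symm (h w (ne_of_mem_erase hw))],
    sum_const, card_erase_of_mem (mem_univ v), card_univ, nsmul_eq_mul, ENat.toENNReal_one,
    mul_one]

lemma le_sum_temporalDist {C : Finset V} (hC : ∀ w ∈ C, w ≠ v ∧ lab v w = ∅) :
    ((Fintype.card V - 1 : ℕ) : ℝ≥0∞) + #C ≤ ∑ w, (temporalDist lab v w : ℝ≥0∞) := by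
  classical
  have hCsub : C ⊆ univ.erase v := fun w hw => mem_erase.2 ⟨(hC w hw).1, mem_univ w⟩
  have hcardC : (#C : ℝ≥0∞) = ∑ w ∈ univ.erase v, if w ∈ C then 1 else 0 := by
    rw [sum_ite_mem, inter_eq_right.2 hCsub, sum_const, nsmul_one]
  rw [← add_sum_erase _ _ (mem_univ v), temporalDist_self, ENat.toENNReal_zero, zero_add,
    hcardC, ← card_univ, ← card_erase_of_mem (mem_univ v), ← nsmul_one, ← sum_const,
    ← sum_add_distrib]
  refine sum_le_sum fun w hw => ?_
  have hwv : v ≠ w := (ne_of_mem_erase hw).symm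
  by_cases hwC : w ∈ C
  · rw [if_pos hwC, one_add_one_eq_two]
    exact_mod_cast two_le_temporalDist hwv (hC w hwC).2
  · rw [if_neg hwC, add_zero]
    exact_mod_cast one_le_temporalDist hwv

end TemporalDist

section Profile
variable {V : Type*} {s : V → Finset (V × ℕ)} {u v : V}

lemma profLab_comm (s : V → Finset (V × ℕ)) (u v : V) : profLab s u v = profLab s v u :=
  Set.ext fun _ => or_comm

lemma profLab_mono {s' : V → Finset (V × ℕ)} (h : ∀ x, s x ⊆ s' x) (x y : V) :
    profLab s x y ⊆ profLab s' x y :=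
  fun _ => Or.imp (fun ht => h _ ht) (fun ht => h _ ht)

lemma mem_profLab_update_erase [DecidableEq V] {x : V} {p : V × ℕ} {τ : ℕ} (hx : x ≠ v)
    (hτ : τ ∈ profLab s v x) (hp : (x, τ) ≠ p) :
    τ ∈ profLab (Function.update s v ((s v).erase p)) v x := by
  rcases hτ with hτ | hτ
  · exact Or.inl (by rwa [Function.update_of_ne hx])
  · exact Or.inr (by rw [Function.update_self]; exact mem_erase.2 ⟨hp, hτ⟩)

variable [DecidableEq V]

lemma coe_labelFinset (s : V → Finset (V × ℕ)) (u v : V) :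
    (labelFinset s u v : Set ℕ) = profLab s u v := by
  ext t
  simp [labelFinset, profLab]

def nonNeighbors [Fintype V] (s : V → Finset (V × ℕ)) (v : V) : Finset V :=
  {w | w ≠ v ∧ labelFinset s v w = ∅}

lemma mem_nonNeighbors [Fintype V] {w : V} :
    w ∈ nonNeighbors s v ↔ w ≠ v ∧ profLab s v w = ∅ := by
  rw [nonNeighbors, mem_filter, ← coe_labelFinset, coe_eq_empty, and_iff_right (mem_univ w)]

end Profile

section Cost
variable {V : Type*} [Fintype V] {α : ℝ} {s : V → Finset (V × ℕ)} {v : V}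

lemma card_sub_one_eq_sum_ite [DecidableEq V] (v : V) :
    Fintype.card V - 1 = ∑ w, if v = w then 0 else 1 := by
  rw [← add_sum_erase _ _ (mem_univ v), if_pos rfl, zero_add,
    sum_congr rfl fun w hw => if_neg (ne_of_mem_erase hw).symm, sum_const,
    card_erase_of_mem (mem_univ v), card_univ, smul_eq_mul, mul_one]

lemma indivCost_eq_of_forall_nonempty (h : ∀ w ≠ v, (profLab s v w).Nonempty) :
    indivCost α s v = ENNReal.ofReal α * #(s v) + (Fintype.card V - 1 : ℕ) := by
  rw [indivCost, sum_temporalDist_eq h]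

lemma le_indivCost {C : Finset V} (hC : ∀ w ∈ C, w ≠ v ∧ profLab s v w = ∅) :
    ENNReal.ofReal α * #(s v) + ((Fintype.card V - 1 : ℕ) + #C) ≤ indivCost α s v :=
  add_le_add le_rfl (le_sum_temporalDist hC)

noncomputable def cliqueCost (V : Type*) [Fintype V] (α : ℝ) : ℝ≥0∞ :=
  ENNReal.ofReal α * ((Fintype.card V * (Fintype.card V - 1) / 2 : ℕ) : ℝ≥0∞) +
    (Fintype.card V * (Fintype.card V - 1) : ℕ)

lemma cliqueCost_ne_top (V : Type*) [Fintype V] (α : ℝ) : cliqueCost V α ≠ ⊤ := by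
  unfold cliqueCost
  finiteness

lemma cliqueCost_ne_zero (h : 2 ≤ Fintype.card V) (α : ℝ) : cliqueCost V α ≠ 0 := by
  rw [cliqueCost, Ne, add_eq_zero, not_and_or]
  right
  exact_mod_cast Nat.mul_ne_zero (by omega) (by omega)

variable [DecidableEq V]

lemma card_sub_one_le_sum_card_labelFinset_add (s : V → Finset (V × ℕ)) (v : V) :
    Fintype.card V - 1 ≤
      (∑ w, if v = w then 0 else #(labelFinset s v w)) + #(nonNeighbors s v) := by
  rw [card_sub_one_eq_sum_ite v, nonNeighbors, card_filter, ← sum_add_distrib]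
  refine sum_le_sum fun w _ => ?_
  by_cases hvw : v = w
  · simp [hvw]
  · by_cases hemp : labelFinset s v w = ∅
    · simp [hvw, hemp, Ne.symm hvw]
    · simp only [hvw, if_false, hemp, and_false]
      exact card_pos.2 (nonempty_iff_ne_empty.2 hemp)

theorem cliqueCost_le_socialCost (hα1 : α ≤ 1) (s : V → Finset (V × ℕ)) :
    cliqueCost V α ≤ socialCost α s := by
  set N := Fintype.card V * (Fintype.card V - 1)
  set m := ∑ v, #(nonNeighbors s v)
  set a := ENNReal.ofReal α
  have hN : N = ∑ _v : V, (Fintype.card V - 1) := by simp [N]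
  have hlabels : N ≤ (∑ u, ∑ v, if u = v then 0 else #(labelFinset s u v)) + m := by
    rw [hN, ← sum_add_distrib]
    exact sum_le_sum fun v _ => card_sub_one_le_sum_card_labelFinset_add s v
  have hdist : (N : ℝ≥0∞) + m ≤ ∑ u, ∑ v, (temporalDist (profLab s) u v : ℝ≥0∞) := by
    rw [hN, Nat.cast_sum, Nat.cast_sum, ← sum_add_distrib]
    exact sum_le_sum fun v _ => le_sum_temporalDist fun w hw => mem_nonNeighbors.1 hw
  -- `numLabels` halves with ℕ-division; `N ≤ T + m` still gives `N / 2 ≤ T / 2 + m`.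
  have hhalf : N / 2 ≤ numLabels s + m := by
    rw [numLabels]
    omega
  calc cliqueCost V α = a * (N / 2 : ℕ) + N := rfl
    _ ≤ a * (numLabels s + m : ℕ) + N := by gcongr
    _ = a * numLabels s + a * m + N := by push_cast; ring
    _ ≤ a * numLabels s + 1 * m + N := by gcongr; exact ENNReal.ofReal_le_one.2 hα1
    _ = a * numLabels s + (N + m) := by ring
    _ ≤ socialCost α s := by rw [socialCost]; gcongr

end Cost

section Nash
variable {V : Type*} [Fintype V] [DecidableEq V] {α : ℝ} {s : V → Finset (V × ℕ)} {u v : V}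

theorem IsNash.profLab_nonempty (hs : IsNash α s) (hα1 : α < 1) (h : u ≠ v) :
    (profLab s u v).Nonempty := by
  by_contra hemp
  set F := nonNeighbors s u
  have hvF : v ∈ F := mem_nonNeighbors.2 ⟨h.symm, Set.not_nonempty_iff_eq_empty.1 hemp⟩
  set t := s u ∪ F.image (·, 0)
  have hsub : ∀ x, s x ⊆ Function.update s u t x := fun x => by
    rcases eq_or_ne x u with rfl | hx
    · rw [Function.update_self]
      exact subset_union_left
    · rw [Function.update_of_ne hx]
  have hconn : ∀ w ≠ u, (profLab (Function.update s u t) u w).Nonempty := by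
    intro w hw
    by_cases hwF : w ∈ F
    · refine ⟨0, Or.inr ?_⟩
      rw [Function.update_self]
      exact mem_union_right _ (mem_image_of_mem _ hwF)
    · have hne : (profLab s u w).Nonempty :=
        Set.nonempty_iff_ne_empty.2 fun he => hwF (mem_nonNeighbors.2 ⟨hw, he⟩)
      exact hne.mono (profLab_mono hsub u w)
  have hcard : #t ≤ #(s u) + #F := (card_union_le _ _).trans (add_le_add le_rfl card_image_le)
  set a := ENNReal.ofReal α
  set k : ℝ≥0∞ := ((Fintype.card V - 1 : ℕ) : ℝ≥0∞)
  have hsaving : a * #F < #F := by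
    simpa only [one_mul] using (ENNReal.mul_lt_mul_iff_left (by simpa using ne_empty_of_mem hvF)
      (ENNReal.natCast_ne_top _)).2 (ENNReal.ofReal_lt_one.2 hα1)
  refine hs u t ?_
  calc indivCost α (Function.update s u t) u = a * #t + k := by
        rw [indivCost_eq_of_forall_nonempty hconn, Function.update_self]
    _ ≤ a * #(s u) + k + a * #F := by
        rw [add_right_comm, ← mul_add]
        gcongr
        exact_mod_cast hcard
    _ < a * #(s u) + k + #F := ENNReal.add_lt_add_left (by finiteness) hsaving
    _ = a * #(s u) + (k + #F) := add_assoc _ _ _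
    _ ≤ indivCost α s u := le_indivCost fun w hw => mem_nonNeighbors.1 hw

theorem IsNash.eq_of_mem_of_mem_profLab (hs : IsNash α s) (hα0 : 0 < α) (hα1 : α < 1)
    (h : u ≠ v) {a b : ℕ} (ha : (u, a) ∈ s v) (hb : b ∈ profLab s u v) : b = a := by
  by_contra hba
  set t := (s v).erase (u, a)
  have hconn : ∀ w ≠ v, (profLab (Function.update s v t) v w).Nonempty := by
    intro w hw
    rcases eq_or_ne w u with rfl | hwu
    · exact ⟨b, mem_profLab_update_erase hw (profLab_comm s w v ▸ hb) (by simp [hba])⟩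
    · obtain ⟨τ, hτ⟩ := hs.profLab_nonempty hα1 hw.symm
      exact ⟨τ, mem_profLab_update_erase hw hτ (by simp [hwu])⟩
  have hpos : ENNReal.ofReal α ≠ 0 := (ENNReal.ofReal_pos.2 hα0).ne'
  refine hs v t ?_
  calc indivCost α (Function.update s v t) v
        = ENNReal.ofReal α * #t + (Fintype.card V - 1 : ℕ) := by
        rw [indivCost_eq_of_forall_nonempty hconn, Function.update_self]
    _ < ENNReal.ofReal α * #t + (Fintype.card V - 1 : ℕ) + ENNReal.ofReal α :=
        ENNReal.lt_add_right (by finiteness) hpos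
    _ = ENNReal.ofReal α * #(s v) + (Fintype.card V - 1 : ℕ) := by
        rw [← card_erase_add_one ha]
        push_cast
        ring
    _ = indivCost α s v :=
        (indivCost_eq_of_forall_nonempty fun w hw => hs.profLab_nonempty hα1 hw.symm).symm

theorem IsNash.card_labelFinset_eq_one (hs : IsNash α s) (hα0 : 0 < α) (hα1 : α < 1)
    (h : u ≠ v) : #(labelFinset s u v) = 1 := by
  have hne : (labelFinset s u v).Nonempty := by
    rw [← coe_nonempty, coe_labelFinset]
    exact hs.profLab_nonempty hα1 h
  refine le_antisymm (card_le_one.2 fun a ha b hb => ?_) hne.card_pos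
  rw [← mem_coe, coe_labelFinset] at ha hb
  rcases ha with ha | ha
  · exact (hs.eq_of_mem_of_mem_profLab hα0 hα1 h ha hb).symm
  · exact (hs.eq_of_mem_of_mem_profLab hα0 hα1 h.symm ha (profLab_comm s u v ▸ hb)).symm

theorem IsNash.socialCost_eq (hs : IsNash α s) (hα0 : 0 < α) (hα1 : α < 1) :
    socialCost α s = cliqueCost V α := by
  have hN : ∑ _u : V, (Fintype.card V - 1) = Fintype.card V * (Fintype.card V - 1) := by simp
  have hlabels : ∀ u : V,
      (∑ v, if u = v then 0 else #(labelFinset s u v)) = Fintype.card V - 1 := fun u => by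
    rw [card_sub_one_eq_sum_ite u]
    refine sum_congr rfl fun v _ => ?_
    split_ifs with huv
    · rfl
    · exact hs.card_labelFinset_eq_one hα0 hα1 huv
  have hdist : ∀ u : V, ∑ v, (temporalDist (profLab s) u v : ℝ≥0∞) = (Fintype.card V - 1 : ℕ) :=
    fun u => sum_temporalDist_eq fun v hv => hs.profLab_nonempty hα1 hv.symm
  rw [socialCost, cliqueCost, numLabels, sum_congr rfl fun u _ => hlabels u,
    sum_congr rfl fun u _ => hdist u, ← Nat.cast_sum, hN]

end Nash

section Clique
variable {n : ℕ} {α : ℝ}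

def clique (n : ℕ) : Fin n → Finset (Fin n × ℕ) :=
  fun i => (Iio i).image (·, 0)

lemma mem_clique {i j : Fin n} {τ : ℕ} : (j, τ) ∈ clique n i ↔ j < i ∧ τ = 0 := by
  simp [clique, eq_comm]

lemma card_clique (i : Fin n) : #(clique n i) = i := by
  rw [clique, card_image_of_injective _ fun a b hab => (Prod.ext_iff.1 hab).1, Fin.card_Iio]

lemma profLab_clique_nonempty {i j : Fin n} (h : i ≠ j) : (profLab (clique n) i j).Nonempty := by
  rcases h.lt_or_gt with hlt | hgt
  · exact ⟨0, Or.inl (mem_clique.2 ⟨hlt, rfl⟩)⟩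
  · exact ⟨0, Or.inr (mem_clique.2 ⟨hgt, rfl⟩)⟩

theorem isNash_clique (hα1 : α ≤ 1) : IsNash α (clique n) := by
  intro i t
  rw [not_lt]
  set C := Iio i \ t.image Prod.fst
  have hC : ∀ j ∈ C, j ≠ i ∧ profLab (Function.update (clique n) i t) i j = ∅ := by
    intro j hj
    obtain ⟨hji, hjt⟩ : j < i ∧ j ∉ t.image Prod.fst := by simpa [C] using hj
    refine ⟨hji.ne, Set.eq_empty_of_forall_notMem fun τ hτ => ?_⟩
    rcases hτ with hτ | hτ
    · rw [Function.update_of_ne hji.ne] at hτ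
      exact (mem_clique.1 hτ).1.asymm hji
    · rw [Function.update_self] at hτ
      exact hjt (mem_image_of_mem Prod.fst hτ)
  have hcard : (i : ℕ) ≤ #t + #C := by
    rw [← Fin.card_Iio, ← card_inter_add_card_sdiff (Iio i) (t.image Prod.fst)]
    exact add_le_add ((card_le_card inter_subset_right).trans card_image_le) le_rfl
  set a := ENNReal.ofReal α
  set k : ℝ≥0∞ := ((Fintype.card (Fin n) - 1 : ℕ) : ℝ≥0∞)
  have hnew := le_indivCost (α := α) hC
  rw [Function.update_self] at hnew
  calc indivCost α (clique n) i = a * (i : ℕ) + k := by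
        rw [indivCost_eq_of_forall_nonempty fun j hj => profLab_clique_nonempty hj.symm,
          card_clique]
    _ ≤ a * #t + a * #C + k := by
        rw [← mul_add]
        gcongr
        exact_mod_cast hcard
    _ ≤ a * #t + 1 * #C + k := by
        gcongr
        exact ENNReal.ofReal_le_one.2 hα1
    _ = a * #t + (k + #C) := by ring
    _ ≤ indivCost α (Function.update (clique n) i t) i := hnew

end Clique

/-- For every atomic cost `0 < α < 1` and every number of players `n ≥ 2`, the price of
stability and the price of anarchy both equal `1`. -/
theorem statement_1 (α : ℝ) (hα0 : 0 < α) (hα1 : α < 1) (n : ℕ) (hn : 2 ≤ n) :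
    PoS α n = 1 ∧ PoA α n = 1 := by
  have hclique : IsNash α (clique n) := isNash_clique hα1.le
  have hNash : ∀ s : {s : Fin n → Finset (Fin n × ℕ) // IsNash α s},
      socialCost α s.1 = cliqueCost (Fin n) α := fun s => s.2.socialCost_eq hα0 hα1
  have hopt : optCost α n = cliqueCost (Fin n) α :=
    le_antisymm (iInf_le_of_le (clique n) (hNash ⟨_, hclique⟩).le)
      (le_iInf (cliqueCost_le_socialCost hα1.le))
  have : Nonempty {s : Fin n → Finset (Fin n × ℕ) // IsNash α s} := ⟨⟨_, hclique⟩⟩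
  have hone : cliqueCost (Fin n) α / cliqueCost (Fin n) α = 1 :=
    ENNReal.div_self (cliqueCost_ne_zero (by simpa using hn) α) (cliqueCost_ne_top _ α)
  simp only [PoS, PoA, hNash, iInf_const, iSup_const, hopt, hone, and_self]
end

section
/- In the labelled hypercube Q_d, for every pair of vertices u and v, the temporal shortest distance from u to v equals the Hamming distance between u and v (the number of coordinates in which they differ); in particular it equals the graph distance between u and v in the hypercube graph. -/
open scoped ENNReal BigOperators

/-- The labelling of the hypercube `Q_d`: vertices are elements of `{0,1}^d`, two vertices
are joined by an edge iff they differ in exactly one coordinate, and the edge whose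
endpoints differ in coordinate `i` (for `0 ≤ i < d`) carries the single time label `i + 1`. -/
def QLab (d : ℕ) : (Fin d → Bool) → (Fin d → Bool) → Set ℕ := fun u v =>
  {t | ∃ i : Fin d, t = (i : ℕ) + 1 ∧ u i ≠ v i ∧ ∀ j : Fin d, j ≠ i → u j = v j}

/-- The hypercube graph on `{0,1}^d`: two vertices are adjacent iff their Hamming distance
is `1`, i.e. they differ in exactly one coordinate. -/
def cubeGraph (d : ℕ) : SimpleGraph (Fin d → Bool) where
  Adj u v := hammingDist u v = 1
  symm := ⟨fun u v h => (hammingDist_comm v u).trans h⟩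
  loopless := ⟨fun u h => by simp [hammingDist_self] at h⟩

/-!
A temporal path in `Q_d` is in particular a walk in the hypercube graph, and each edge changes
exactly one coordinate, so no temporal path (and no walk) is shorter than the Hamming distance.
Conversely, correcting the differing coordinates in increasing order uses increasing labels and
gives a temporal path of exactly that length; being a geodesic of the hypercube graph, it
repeats no vertex.
-/

open Function SimpleGraph

theorem hammingDist_eq_one_of_ne_of_eq {ι β : Type*} [Fintype ι] [DecidableEq β]
    {x y : ι → β} {i : ι} (hi : x i ≠ y i) (h : ∀ j ≠ i, x j = y j) :
    hammingDist x y = 1 := by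
  rw [hammingDist, Finset.card_eq_one]
  refine ⟨i, Finset.eq_singleton_iff_unique_mem.2 ⟨by simpa using hi, fun j hj => ?_⟩⟩
  by_contra hji
  exact (Finset.mem_filter.1 hj).2 (h j hji)

theorem exists_walk_of_isChain {V : Type*} {G : SimpleGraph V} {lab : V → V → Set ℕ}
    (hlab : ∀ a b, ∀ t ∈ lab a b, G.Adj a b) {u v : V} {p : List (V × ℕ)}
    (hc : ((u, 0) :: p).IsChain fun a b => b.2 ∈ lab a.1 b.1)
    (hlast : (u :: p.map Prod.fst).getLast (List.cons_ne_nil _ _) = v) :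
    ∃ w : G.Walk u v, w.length = p.length ∧ w.support = u :: p.map Prod.fst := by
  have hadj : (u :: p.map Prod.fst).IsChain G.Adj :=
    (List.isChain_map Prod.fst (l := (u, 0) :: p)).2
      (List.IsChain.imp (fun a b h => hlab _ _ _ h) hc)
  refine ⟨(Walk.ofSupport _ (List.cons_ne_nil _ _) hadj).copy List.head_cons hlast, ?_, ?_⟩
  · rw [Walk.length_copy, Walk.length_ofSupport]
    simp
  · rw [Walk.support_copy, Walk.support_ofSupport]

namespace Hypercube

variable {d : ℕ}

theorem cubeGraph_adj_of_mem_QLab {u w : Fin d → Bool} {t : ℕ} (h : t ∈ QLab d u w) :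
    (cubeGraph d).Adj u w := by
  obtain ⟨i, -, hi, hj⟩ := h
  exact hammingDist_eq_one_of_ne_of_eq hi hj

theorem hammingDist_le_length {u v : Fin d → Bool} (w : (cubeGraph d).Walk u v) :
    hammingDist u v ≤ w.length := by
  induction w with
  | nil => simp
  | @cons a b c hadj w ih =>
    calc hammingDist a c ≤ hammingDist a b + hammingDist b c := hammingDist_triangle _ _ _
      _ ≤ 1 + w.length := Nat.add_le_add (le_of_eq hadj) ih
      _ = (Walk.cons hadj w).length := by simp [Nat.add_comm]

theorem hammingDist_le_dist {u v : Fin d → Bool} (h : (cubeGraph d).Reachable u v) :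
    hammingDist u v ≤ (cubeGraph d).dist u v := by
  obtain ⟨w, hw⟩ := h.exists_walk_length_eq_dist
  exact hw ▸ hammingDist_le_length w

def correctPath (v : Fin d → Bool) :
    (Fin d → Bool) → List (Fin d) → List ((Fin d → Bool) × ℕ)
  | _, [] => []
  | x, i :: L => (update x i (v i), i + 1) :: correctPath v (update x i (v i)) L

section

variable (v : Fin d → Bool)

theorem chain_correctPath {L : List (Fin d)} (hL : L.Nodup) {x : Fin d → Bool}
    (hx : ∀ i ∈ L, x i ≠ v i) (t : ℕ) :
    ((x, t) :: correctPath v x L).IsChain fun a b => b.2 ∈ QLab d a.1 b.1 := by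
  induction L generalizing x t with
  | nil => exact List.IsChain.singleton _
  | cons i L ih =>
    obtain ⟨hiL, hL⟩ := List.nodup_cons.1 hL
    refine List.IsChain.cons_cons ⟨i, rfl, by simpa using hx i List.mem_cons_self,
      fun j hj => (update_of_ne hj _ _).symm⟩ (ih hL (fun j hj => ?_) _)
    rw [update_of_ne (ne_of_mem_of_not_mem hj hiL)]
    exact hx j (List.mem_cons_of_mem i hj)

theorem map_snd_correctPath (x : Fin d → Bool) (L : List (Fin d)) :
    (correctPath v x L).map Prod.snd = L.map fun i : Fin d => (i : ℕ) + 1 := by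
  induction L generalizing x with
  | nil => rfl
  | cons i L ih => simp [correctPath, ih]

theorem length_correctPath (x : Fin d → Bool) (L : List (Fin d)) :
    (correctPath v x L).length = L.length := by
  simpa using congrArg List.length (map_snd_correctPath v x L)

theorem getLast_correctPath {L : List (Fin d)} {x : Fin d → Bool} (hx : ∀ j ∉ L, x j = v j) :
    (x :: (correctPath v x L).map Prod.fst).getLast (List.cons_ne_nil _ _) = v := by
  induction L generalizing x with
  | nil => exact funext fun j => hx j List.not_mem_nil
  | cons i L ih =>
    refine ih fun j hj => ?_
    by_cases hji : j = i
    · subst hji; exact update_self _ _ _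
    · change update x i (v i) j = v j
      rw [update_of_ne hji]
      exact hx j (by simp [hji, hj])

end

theorem exists_isTemporalPath_length_eq_hammingDist (u v : Fin d → Bool) :
    ∃ p, IsTemporalPath (QLab d) u v p ∧ p.length = hammingDist u v := by
  set L := ({j | u j ≠ v j} : Finset (Fin d)).sort (· ≤ ·)
  have hmem : ∀ j, j ∈ L ↔ u j ≠ v j := by simp [L]
  have hsorted : L.Pairwise (· < ·) := (Finset.sortedLT_sort _).pairwise
  have hc := chain_correctPath v hsorted.nodup (fun i hi => (hmem i).1 hi) 0
  have hlast := getLast_correctPath v (x := u) fun j hj => not_not.1 (mt (hmem j).2 hj)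
  have hlen : (correctPath v u L).length = hammingDist u v := by
    rw [length_correctPath, Finset.length_sort, hammingDist]
  obtain ⟨w, hwlen, hwsupp⟩ :=
    exists_walk_of_isChain (fun _ _ _ => cubeGraph_adj_of_mem_QLab) hc hlast
  have hgeodesic : w.length = (cubeGraph d).dist u v :=
    le_antisymm (hwlen ▸ hlen ▸ hammingDist_le_dist w.reachable) (dist_le w)
  have hnodup := hwsupp ▸ (w.isPath_of_length_eq_dist hgeodesic).support_nodup
  refine ⟨_, ⟨hc, ?_, hnodup, hlast⟩, hlen⟩
  rw [map_snd_correctPath]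
  exact (List.isChain_map fun i : Fin d => (i : ℕ) + 1).2
    (hsorted.isChain.imp fun _ _ h => Nat.add_lt_add_right h 1)

theorem temporalDist_QLab (u v : Fin d → Bool) :
    temporalDist (QLab d) u v = hammingDist u v := by
  obtain ⟨p, hp, hlen⟩ := exists_isTemporalPath_length_eq_hammingDist u v
  refine le_antisymm (sInf_le ⟨p, hp, by rw [hlen]⟩) (le_sInf ?_)
  rintro _ ⟨q, hq, rfl⟩
  obtain ⟨w, hw, -⟩ :=
    exists_walk_of_isChain (fun _ _ _ => cubeGraph_adj_of_mem_QLab) hq.1 hq.2.2.2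
  exact_mod_cast hw ▸ hammingDist_le_length w

theorem hammingDist_eq_dist (u v : Fin d → Bool) : hammingDist u v = (cubeGraph d).dist u v := by
  obtain ⟨p, hp, hlen⟩ := exists_isTemporalPath_length_eq_hammingDist u v
  obtain ⟨w, hw, -⟩ :=
    exists_walk_of_isChain (fun _ _ _ => cubeGraph_adj_of_mem_QLab) hp.1 hp.2.2.2
  exact le_antisymm (hammingDist_le_dist w.reachable) (hlen ▸ hw ▸ dist_le w)

end Hypercube

theorem statement_13_general (d : ℕ) (u v : Fin d → Bool) :
    temporalDist (QLab d) u v = (hammingDist u v : ℕ∞) ∧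
      hammingDist u v = (cubeGraph d).dist u v :=
  ⟨Hypercube.temporalDist_QLab u v, Hypercube.hammingDist_eq_dist u v⟩

/-- In the labelled hypercube `Q_d`, the temporal shortest distance between any two vertices
equals their Hamming distance (the number of coordinates in which they differ); in
particular, it equals the graph distance in the hypercube graph. -/
theorem statement_13 (d : ℕ) (hd : 1 ≤ d) (u v : Fin d → Bool) :
    temporalDist (QLab d) u v = (hammingDist u v : ℕ∞) ∧
      hammingDist u v = (cubeGraph d).dist u v :=
  statement_13_general d u v
end

section
/- In the labelled hypercube Q_d, for every ordered pair of distinct vertices u and v there is exactly one temporal path from u to v. In particular, when u and v are adjacent, the unique temporal path from u to v is the single edge uv together with its label. -/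
open scoped ENNReal BigOperators

/-!
Each step of a temporal path in `Q_d` flips one coordinate `i` and uses the label `i + 1`, so
along a temporal path the flipped coordinates strictly increase. Hence each coordinate is flipped
at most once, the endpoint differs from the start exactly in the flipped coordinates, and the
path must flip the coordinates in which `u` and `v` differ, in increasing order.
-/

theorem isTemporalPath_singleton {V : Type*} {lab : V → V → Set ℕ} {u v : V} {t : ℕ}
    (ht : t ∈ lab u v) (huv : u ≠ v) : IsTemporalPath lab u v [(v, t)] :=
  ⟨List.isChain_pair.2 ht, List.isChain_singleton _, by simpa using huv, rfl⟩

namespace QLab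

variable {d : ℕ}

def flipCoord (u : Fin d → Bool) (i : Fin d) : Fin d → Bool :=
  Function.update u i (!u i)

@[simp]
theorem flipCoord_self (u : Fin d → Bool) (i : Fin d) : flipCoord u i i = !u i := by
  simp [flipCoord]

theorem flipCoord_of_ne (u : Fin d → Bool) {i j : Fin d} (h : j ≠ i) :
    flipCoord u i j = u j :=
  Function.update_of_ne h _ _

theorem mem_QLab_iff {u w : Fin d → Bool} {t : ℕ} :
    t ∈ QLab d u w ↔ ∃ i : Fin d, t = i + 1 ∧ w = flipCoord u i := by
  refine exists_congr fun i => and_congr_right fun _ => ⟨fun ⟨hi, hj⟩ => ?_, ?_⟩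
  · funext j
    rcases eq_or_ne j i with rfl | hji
    · rw [flipCoord_self]
      revert hi
      cases u j <;> cases w j <;> simp
    · rw [flipCoord_of_ne u hji, hj j hji]
  · rintro rfl
    exact ⟨by simp, fun j hj => (flipCoord_of_ne u hj).symm⟩

def flipPath : (Fin d → Bool) → List (Fin d) → List ((Fin d → Bool) × ℕ)
  | _, [] => []
  | u, i :: l => (flipCoord u i, i + 1) :: flipPath (flipCoord u i) l

theorem chain_iff_exists_eq_flipPath {p : List ((Fin d → Bool) × ℕ)} {u : Fin d → Bool}
    {t : ℕ} :
    List.IsChain (fun a b => b.2 ∈ QLab d a.1 b.1) ((u, t) :: p) ↔ ∃ l, p = flipPath u l := by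
  induction p generalizing u t with
  | nil => exact ⟨fun _ => ⟨[], rfl⟩, fun _ => List.isChain_singleton _⟩
  | cons b p ih =>
    obtain ⟨w, s⟩ := b
    rw [List.isChain_cons_cons, ih]
    simp only [mem_QLab_iff]
    constructor
    · rintro ⟨⟨i, rfl, rfl⟩, l, rfl⟩
      exact ⟨i :: l, rfl⟩
    · rintro ⟨_ | ⟨i, l⟩, h⟩
      · cases h
      · simp only [flipPath, List.cons.injEq, Prod.mk.injEq] at h
        obtain ⟨⟨rfl, rfl⟩, rfl⟩ := h
        exact ⟨⟨i, rfl, rfl⟩, l, rfl⟩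

theorem isChain_map_snd_flipPath_iff {u : Fin d → Bool} {l : List (Fin d)} :
    List.IsChain (· < ·) ((flipPath u l).map Prod.snd) ↔ l.SortedLT := by
  have hsnd : (flipPath u l).map Prod.snd = l.map (fun i : Fin d => (i : ℕ) + 1) := by
    induction l generalizing u with
    | nil => rfl
    | cons i l ih => simp [flipPath, ih]
  rw [hsnd, List.isChain_map, List.sortedLT_iff_isChain]
  simp only [add_lt_add_iff_right, Fin.val_fin_lt]

theorem getLast_flipPath (u : Fin d → Bool) (l : List (Fin d)) :
    (u :: (flipPath u l).map Prod.fst).getLast (List.cons_ne_nil _ _) = l.foldl flipCoord u := by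
  induction l generalizing u with
  | nil => rfl
  | cons i l ih => exact (List.getLast_cons (List.cons_ne_nil _ _)).trans (ih (flipCoord u i))

theorem foldl_flipCoord_apply {l : List (Fin d)} (hl : l.Nodup) (u : Fin d → Bool) (j : Fin d) :
    l.foldl flipCoord u j = if j ∈ l then !u j else u j := by
  induction l generalizing u with
  | nil => simp
  | cons i l ih =>
    obtain ⟨hi, hl⟩ := List.nodup_cons.mp hl
    rw [List.foldl_cons, ih hl]
    rcases eq_or_ne j i with rfl | hji
    · simp [hi]
    · simp [flipCoord_of_ne u hji, hji]

theorem foldl_flipCoord_eq_iff {l : List (Fin d)} (hl : l.Nodup) {u v : Fin d → Bool} :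
    l.foldl flipCoord u = v ↔ ∀ j, j ∈ l ↔ u j ≠ v j := by
  simp only [funext_iff, foldl_flipCoord_apply hl]
  refine forall_congr' fun j => ?_
  by_cases hj : j ∈ l <;> cases u j <;> cases v j <;> simp [hj]

theorem apply_eq_of_mem_flipPath {l : List (Fin d)} {u w : Fin d → Bool}
    (hw : w ∈ (flipPath u l).map Prod.fst) {j : Fin d} (hj : j ∉ l) : w j = u j := by
  induction l generalizing u with
  | nil => simp [flipPath] at hw
  | cons i l ih =>
    rw [List.mem_cons, not_or] at hj
    obtain ⟨hji, hj⟩ := hj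
    simp only [flipPath, List.map_cons, List.mem_cons] at hw
    rcases hw with rfl | hw
    · exact flipCoord_of_ne u hji
    · rw [ih hw hj, flipCoord_of_ne u hji]

/-- After flipping coordinate `i`, the walk never flips `i` again, so it never revisits a
vertex. -/
theorem nodup_flipPath {l : List (Fin d)} (hl : l.Nodup) (u : Fin d → Bool) :
    (u :: (flipPath u l).map Prod.fst).Nodup := by
  induction l generalizing u with
  | nil => simp [flipPath]
  | cons i l ih =>
    obtain ⟨hi, hl⟩ := List.nodup_cons.mp hl
    refine List.nodup_cons.mpr ⟨?_, ih hl (flipCoord u i)⟩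
    simp only [flipPath, List.map_cons, List.mem_cons, not_or]
    refine ⟨fun h => by simpa using congrFun h i, fun hmem => ?_⟩
    simpa using apply_eq_of_mem_flipPath hmem hi

theorem isTemporalPath_flipPath_iff {u v : Fin d → Bool} {l : List (Fin d)} :
    IsTemporalPath (QLab d) u v (flipPath u l) ↔ l.SortedLT ∧ ∀ j, j ∈ l ↔ u j ≠ v j := by
  unfold IsTemporalPath
  rw [List.Chain', isChain_map_snd_flipPath_iff, getLast_flipPath]
  constructor
  · rintro ⟨-, hs, -, hv⟩
    exact ⟨hs, (foldl_flipCoord_eq_iff hs.nodup).1 hv⟩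
  · rintro ⟨hs, hm⟩
    exact ⟨chain_iff_exists_eq_flipPath.2 ⟨l, rfl⟩, hs, nodup_flipPath hs.nodup u,
      (foldl_flipCoord_eq_iff hs.nodup).2 hm⟩

theorem existsUnique_isTemporalPath (u v : Fin d → Bool) :
    ∃! p, IsTemporalPath (QLab d) u v p := by
  set l₀ := (List.finRange d).filter (fun j => u j ≠ v j)
  have hl₀ : l₀.SortedLT ∧ ∀ j, j ∈ l₀ ↔ u j ≠ v j :=
    ⟨((List.sortedLT_finRange d).pairwise.sublist List.filter_sublist).sortedLT, by simp [l₀]⟩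
  refine ⟨flipPath u l₀, isTemporalPath_flipPath_iff.2 hl₀, fun p hp => ?_⟩
  obtain ⟨l, rfl⟩ := chain_iff_exists_eq_flipPath.1 hp.1
  obtain ⟨hs, hm⟩ := isTemporalPath_flipPath_iff.1 hp
  rw [hs.eq_of_mem_iff hl₀.1 fun j => (hm j).trans (hl₀.2 j).symm]

end QLab

theorem statement_14_general (d : ℕ) (u v : Fin d → Bool) :
    (∃! p : List ((Fin d → Bool) × ℕ), IsTemporalPath (QLab d) u v p) ∧
      ((∃ i : Fin d, u i ≠ v i ∧ ∀ j : Fin d, j ≠ i → u j = v j) →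
        ∀ p : List ((Fin d → Bool) × ℕ), IsTemporalPath (QLab d) u v p →
          ∃ i : Fin d, u i ≠ v i ∧ p = [(v, (i : ℕ) + 1)]) := by
  obtain ⟨_, -, huniq⟩ := QLab.existsUnique_isTemporalPath u v
  refine ⟨QLab.existsUnique_isTemporalPath u v, ?_⟩
  rintro ⟨i, hi, hother⟩ p hp
  have hedge : IsTemporalPath (QLab d) u v [(v, (i : ℕ) + 1)] :=
    isTemporalPath_singleton ⟨i, rfl, hi, hother⟩ fun h => hi (congrFun h i)
  exact ⟨i, hi, (huniq p hp).trans (huniq _ hedge).symm⟩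

/-- In the labelled hypercube `Q_d`, for every ordered pair of distinct vertices `u` and `v`
there is exactly one temporal path from `u` to `v`; in particular, when `u` and `v` differ in
exactly one coordinate `i`, the unique temporal path from `u` to `v` is the single edge `uv`
together with its time label `i + 1`. -/
theorem statement_14 (d : ℕ) (hd : 1 ≤ d) (u v : Fin d → Bool) (huv : u ≠ v) :
    (∃! p : List ((Fin d → Bool) × ℕ), IsTemporalPath (QLab d) u v p) ∧
      ((∃ i : Fin d, u i ≠ v i ∧ ∀ j : Fin d, j ≠ i → u j = v j) →
        ∀ p : List ((Fin d → Bool) × ℕ), IsTemporalPath (QLab d) u v p →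
          ∃ i : Fin d, u i ≠ v i ∧ p = [(v, (i : ℕ) + 1)]) :=
  statement_14_general d u v
end

section
/- In the dynamic network creation game in which players' communication cost uses the temporal shortest distance, for every real atomic cost α > 0 and every integer d ≥ 1, any strategy profile on the 2^d players {0,1}^d in which every edge of the labelled hypercube Q_d is bought, with its time label, by exactly one of its two endpoints, and in which strategies contain nothing else, has social cost exactly α·d·2^{d−1} + d·2^{2d−1}. -/
open scoped ENNReal BigOperators

/-!
In `Q_d` an edge with label `i + 1` flips coordinate `i`, so every temporal path from `u` to `v`
has at least `hammingDist u v` edges, and flipping the differing coordinates in increasing order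
is a temporal path with exactly that many. Hence the distance part of the social cost is the sum
of all Hamming distances in `{0,1}^d`, namely `2^d · d · 2^(d-1)`, while each of the `2^d`
vertices lies on `d` edges, each carrying one label.
-/

open Finset

section FlipCoord

variable {ι : Type*} [DecidableEq ι]

def flipCoord (u : ι → Bool) (i : ι) : ι → Bool :=
  Function.update u i (!u i)

@[simp]
lemma flipCoord_self (u : ι → Bool) (i : ι) : flipCoord u i i = !u i :=
  Function.update_self _ _ _

@[simp]
lemma flipCoord_of_ne (u : ι → Bool) {i j : ι} (h : j ≠ i) : flipCoord u i j = u j :=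
  Function.update_of_ne h _ _

lemma flipCoord_ne_self (u : ι → Bool) (i : ι) : flipCoord u i ≠ u := fun h => by
  simpa using congrFun h i

lemma eq_flipCoord_iff {u v : ι → Bool} {i : ι} :
    v = flipCoord u i ↔ u i ≠ v i ∧ ∀ j, j ≠ i → u j = v j := by
  rw [flipCoord, Function.eq_update_iff]
  refine and_congr ?_ (forall₂_congr fun _ _ => eq_comm)
  cases u i <;> cases v i <;> decide

variable [Fintype ι]

lemma sum_card_filter_eq_flipCoord (u : ι → Bool) :
    ∑ v, #{i | v = flipCoord u i} = Fintype.card ι := by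
  simp only [card_filter]
  rw [Finset.sum_comm]
  simp

lemma card_filter_apply_ne (b : Bool) (i : ι) :
    #{v : ι → Bool | b ≠ v i} = 2 ^ (Fintype.card ι - 1) := by
  have h := Fintype.card_filter_piFinset_const (univ : Finset Bool) i (!b)
  simp only [Fintype.piFinset_univ, mem_univ, if_true, card_univ, Fintype.card_bool] at h
  rw [← h]
  congr 1
  ext v
  simp only [mem_filter, mem_univ, true_and]
  cases b <;> cases v i <;> decide

lemma sum_sum_hammingDist :
    ∑ u : ι → Bool, ∑ v : ι → Bool, hammingDist u v =
      Fintype.card ι * 2 ^ (2 * Fintype.card ι - 1) := by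
  calc ∑ u : ι → Bool, ∑ v : ι → Bool, hammingDist u v
      = ∑ u : ι → Bool, ∑ i : ι, #{v : ι → Bool | u i ≠ v i} := by
        refine sum_congr rfl fun u _ => ?_
        simp only [hammingDist, card_filter]
        exact Finset.sum_comm
    _ = 2 ^ Fintype.card ι * (Fintype.card ι * 2 ^ (Fintype.card ι - 1)) := by
        simp [card_filter_apply_ne]
    _ = Fintype.card ι * 2 ^ (2 * Fintype.card ι - 1) := by
        rcases Fintype.card ι with _ | n
        · simp
        · rw [show 2 * (n + 1) - 1 = (n + 1) + n by omega, Nat.add_sub_cancel, pow_add]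
          ring

end FlipCoord

section Hypercube

variable {d : ℕ}

lemma mem_QLab_iff {u v : Fin d → Bool} {t : ℕ} :
    t ∈ QLab d u v ↔ ∃ i : Fin d, t = i + 1 ∧ v = flipCoord u i := by
  simp only [QLab, Set.mem_ofPred_eq, eq_flipCoord_iff]

lemma QLab_comm (u v : Fin d → Bool) : QLab d u v = QLab d v u := by
  ext t
  constructor <;> exact fun ⟨i, h1, h2, h3⟩ => ⟨i, h1, Ne.symm h2, fun j hj => (h3 j hj).symm⟩

lemma hammingDist_le_one_of_mem_QLab {u v : Fin d → Bool} {t : ℕ} (h : t ∈ QLab d u v) :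
    hammingDist u v ≤ 1 := by
  obtain ⟨i, -, -, hagree⟩ := h
  calc hammingDist u v ≤ #{i} :=
        card_le_card fun j hj => mem_singleton.2 <| by
          by_contra hji
          exact (mem_filter.1 hj).2 (hagree j hji)
    _ = 1 := card_singleton i

lemma hammingDist_le_length_of_chain {u v : Fin d → Bool} {t : ℕ}
    {p : List ((Fin d → Bool) × ℕ)}
    (hchain : List.IsChain (fun a b => b.2 ∈ QLab d a.1 b.1) ((u, t) :: p))
    (hlast : (u :: p.map Prod.fst).getLast (List.cons_ne_nil _ _) = v) :
    hammingDist u v ≤ p.length := by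
  induction p generalizing u t with
  | nil =>
    subst hlast
    simp
  | cons a p ih =>
    obtain ⟨hstep, hchain⟩ := List.isChain_cons_cons.1 hchain
    rw [List.map_cons, List.getLast_cons (List.cons_ne_nil _ _)] at hlast
    calc hammingDist u v ≤ hammingDist u a.1 + hammingDist a.1 v := hammingDist_triangle _ _ _
      _ ≤ 1 + p.length := add_le_add (hammingDist_le_one_of_mem_QLab hstep) (ih hchain hlast)
      _ = (a :: p).length := by simp [add_comm]

def flipPath (u : Fin d → Bool) : List (Fin d) → List ((Fin d → Bool) × ℕ)
  | [] => []
  | i :: l => (flipCoord u i, i + 1) :: flipPath (flipCoord u i) l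

@[simp]
lemma length_flipPath (u : Fin d → Bool) (l : List (Fin d)) :
    (flipPath u l).length = l.length := by
  induction l generalizing u <;> simp [flipPath, *]

lemma map_snd_flipPath (u : Fin d → Bool) (l : List (Fin d)) :
    (flipPath u l).map Prod.snd = l.map fun i : Fin d => (i : ℕ) + 1 := by
  induction l generalizing u <;> simp [flipPath, *]

lemma chain_flipPath (u : Fin d → Bool) (l : List (Fin d)) (t : ℕ) :
    List.IsChain (fun a b => b.2 ∈ QLab d a.1 b.1) ((u, t) :: flipPath u l) := by
  induction l generalizing u t with
  | nil => exact .singleton _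
  | cons i l ih => exact .cons_cons (mem_QLab_iff.2 ⟨i, rfl, rfl⟩) (ih _ _)

lemma apply_eq_of_mem_flipPath {u x : Fin d → Bool} {l : List (Fin d)} {i : Fin d}
    (hi : i ∉ l) (hx : x ∈ (flipPath u l).map Prod.fst) : x i = u i := by
  induction l generalizing u with
  | nil => simp [flipPath] at hx
  | cons j l ih =>
    have hij : i ≠ j := fun h => hi (h ▸ List.mem_cons_self)
    simp only [flipPath, List.map_cons, List.mem_cons] at hx
    rcases hx with rfl | hx
    · exact flipCoord_of_ne u hij
    · rw [ih (fun h => hi (List.mem_cons_of_mem _ h)) hx, flipCoord_of_ne u hij]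

lemma nodup_flipPath (u : Fin d → Bool) {l : List (Fin d)} (hl : l.Nodup) :
    (u :: (flipPath u l).map Prod.fst).Nodup := by
  induction l generalizing u with
  | nil => simp [flipPath]
  | cons i l ih =>
    obtain ⟨hi, hl⟩ := List.nodup_cons.1 hl
    refine List.nodup_cons.2 ⟨fun hu => ?_, ih _ hl⟩
    -- every vertex after the first step has coordinate `i` flipped
    have : u i = !u i := by
      rcases List.mem_cons.1 hu with h | h
      · exact (congrFun h i).trans (flipCoord_self u i)
      · exact (apply_eq_of_mem_flipPath hi h).trans (flipCoord_self u i)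
    cases h : u i <;> simp [h] at this

lemma getLast_flipPath {u v : Fin d → Bool} {l : List (Fin d)} (hl : l.Nodup)
    (hdiff : ∀ j, j ∈ l ↔ u j ≠ v j) :
    (u :: (flipPath u l).map Prod.fst).getLast (List.cons_ne_nil _ _) = v := by
  induction l generalizing u with
  | nil => exact funext fun j => not_not.1 fun h => by simpa using (hdiff j).2 h
  | cons i l ih =>
    obtain ⟨hi, hl⟩ := List.nodup_cons.1 hl
    simp only [flipPath, List.map_cons]
    rw [List.getLast_cons (List.cons_ne_nil _ _)]
    refine ih hl fun j => ?_
    by_cases hji : j = i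
    · subst hji
      have := (hdiff j).1 List.mem_cons_self
      simp only [hi, false_iff, flipCoord_self, ne_eq, not_not]
      revert this
      cases u j <;> cases v j <;> decide
    · simpa [hji, flipCoord_of_ne u hji] using hdiff j

lemma temporalDist_QLab (u v : Fin d → Bool) :
    temporalDist (QLab d) u v = hammingDist u v := by
  apply le_antisymm
  · set l := (univ.filter fun i => u i ≠ v i).sort
    have hl : l.SortedLT := sortedLT_sort _
    have hdiff : ∀ j, j ∈ l ↔ u j ≠ v j := by simp [l]
    refine sInf_le ⟨flipPath u l, ⟨chain_flipPath u l 0, ?_, nodup_flipPath u hl.nodup,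
      getLast_flipPath hl.nodup hdiff⟩, by simp [l, hammingDist]⟩
    rw [map_snd_flipPath]
    exact (List.isChain_map fun i : Fin d => (i : ℕ) + 1).2
      (hl.isChain.imp fun _ _ h => Nat.succ_lt_succ h)
  · refine le_sInf ?_
    rintro n ⟨p, ⟨hchain, -, -, hlast⟩, rfl⟩
    exact_mod_cast hammingDist_le_length_of_chain hchain hlast

end Hypercube

section Profile

lemma mem_labelFinset {V : Type*} [DecidableEq V] {s : V → Finset (V × ℕ)} {u v : V} {t : ℕ} :
    t ∈ labelFinset s u v ↔ t ∈ profLab s u v := by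
  simp [labelFinset, profLab]

variable {d : ℕ} {s : (Fin d → Bool) → Finset ((Fin d → Bool) × ℕ)}

lemma profLab_eq_QLab (hbuy : ∀ (v w : Fin d → Bool) (t : ℕ), (w, t) ∈ s v → t ∈ QLab d v w)
    (hcover : ∀ (v w : Fin d → Bool) (t : ℕ), t ∈ QLab d v w → (v, t) ∉ s w → (w, t) ∈ s v) :
    profLab s = QLab d := by
  ext u v t
  refine ⟨fun h => h.elim (fun h => QLab_comm v u ▸ hbuy v u t h) (hbuy u v t), fun ht => ?_⟩
  by_cases h : (v, t) ∈ s u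
  · exact Or.inr h
  · exact Or.inl (hcover v u t (QLab_comm u v ▸ ht) h)

lemma labelFinset_eq_image (hlab : profLab s = QLab d) (u v : Fin d → Bool) :
    labelFinset s u v =
      image (fun i : Fin d => (i : ℕ) + 1) {i | v = flipCoord u i} := by
  ext t
  rw [mem_labelFinset, hlab, mem_QLab_iff]
  simp [eq_comm, and_comm]

lemma numLabels_eq (hlab : profLab s = QLab d) : numLabels s = d * 2 ^ (d - 1) := by
  have hcard : ∀ u v,
      (if u = v then 0 else #(labelFinset s u v)) = #{i | v = flipCoord u i} := by
    intro u v
    rw [labelFinset_eq_image hlab,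
      card_image_of_injective _ fun i j h => Fin.ext (by simpa using h)]
    split_ifs with huv
    · subst huv
      simp [(flipCoord_ne_self u _).symm]
    · rfl
  simp only [numLabels, hcard, sum_card_filter_eq_flipCoord, Fintype.card_fin, sum_const,
    card_univ, Fintype.card_pi, prod_const, Fintype.card_bool, smul_eq_mul]
  rcases d with _ | n
  · simp
  · rw [Nat.div_eq_of_eq_mul_left two_pos]
    simp only [pow_succ, add_tsub_cancel_right]
    ring

end Profile

theorem statement_15_general (α : ℝ) (d : ℕ)
    (s : (Fin d → Bool) → Finset ((Fin d → Bool) × ℕ))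
    (hbuy : ∀ (v w : Fin d → Bool) (t : ℕ), (w, t) ∈ s v → t ∈ QLab d v w)
    (honce : ∀ (v w : Fin d → Bool) (t : ℕ),
      t ∈ QLab d v w → ((w, t) ∈ s v ↔ (v, t) ∉ s w)) :
    socialCost α s =
      ENNReal.ofReal α * ((d : ℝ≥0∞) * 2 ^ (d - 1)) + (d : ℝ≥0∞) * 2 ^ (2 * d - 1) := by
  have hlab : profLab s = QLab d :=
    profLab_eq_QLab hbuy fun v w t ht => (honce v w t ht).2
  have hdist : ∀ u v, (temporalDist (profLab s) u v : ℝ≥0∞) = hammingDist u v := by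
    intro u v
    rw [hlab, temporalDist_QLab]
    simp
  simp only [socialCost, numLabels_eq hlab, hdist, ← Nat.cast_sum, sum_sum_hammingDist,
    Fintype.card_fin]
  push_cast
  rfl

/-- For every atomic cost `α > 0` and every integer `d ≥ 1`, any strategy profile on the
`2^d` players `{0,1}^d` in which every edge of the labelled hypercube `Q_d` is bought, with
its time label, by exactly one of its two endpoints, and in which strategies contain nothing
else, has social cost exactly `α·d·2^(d-1) + d·2^(2d-1)`. -/
theorem statement_15 (α : ℝ) (hα : 0 < α) (d : ℕ) (hd : 1 ≤ d)
    (s : (Fin d → Bool) → Finset ((Fin d → Bool) × ℕ))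
    (hbuy : ∀ (v w : Fin d → Bool) (t : ℕ), (w, t) ∈ s v → t ∈ QLab d v w)
    (honce : ∀ (v w : Fin d → Bool) (t : ℕ),
      t ∈ QLab d v w → ((w, t) ∈ s v ↔ (v, t) ∉ s w)) :
    socialCost α s =
      ENNReal.ofReal α * ((d : ℝ≥0∞) * 2 ^ (d - 1)) + (d : ℝ≥0∞) * 2 ^ (2 * d - 1) :=
  statement_15_general α d s hbuy honce
end
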